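/- Let f : ℂ^{n+1} → ℂ be a homogeneous polynomial and suppose the partial derivatives of f satisfy the linear relation ∑_{i=0}^{n} p_i · ∂f/∂x_i = 0 identically on ℂ^{n+1}, for a point p = (p_0, …, p_n) with p_0 ≠ 0. Then after the linear change of coordinates sending p to (1,0,…,0), the polynomial f does not depend on the first coordinate, i.e., ∂f/∂x_0 = 0 identically in the new coordinates. -/

import Mathlib

/-!
By the chain rule, `∂₀ (f ∘ M) = (∑ i, M i 0 • ∂ᵢ f) ∘ M`. The first column of `M` is `p`, so the
right-hand side is the cone relation `∑ i, p i • ∂ᵢ f = 0` pulled back along `M`.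
-/

open MvPolynomial

namespace MvPolynomial

variable {R σ τ : Type*} [CommSemiring R]

theorem pderiv_aeval [Fintype σ] (k : τ) (g : σ → MvPolynomial τ R) (f : MvPolynomial σ R) :
    pderiv k (aeval g f) = ∑ i, aeval g (pderiv i f) * pderiv k (g i) := by
  classical
  induction f using MvPolynomial.induction_on with
  | C a => simp
  | add f₁ f₂ h₁ h₂ => simp only [map_add, h₁, h₂, add_mul, Finset.sum_add_distrib]
  | mul_X f j h =>
    simp only [map_mul, aeval_X, pderiv_mul, h, pderiv_X, map_add, add_mul, Finset.sum_add_distrib,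
      Finset.sum_mul, Pi.single_apply]
    simp [mul_comm, mul_assoc]

theorem pderiv_sum_smul_X [Fintype σ] (a : σ → R) (k : σ) :
    pderiv k (∑ j, a j • X j : MvPolynomial σ R) = C (a k) := by
  classical
  simp [pderiv_X, Pi.single_apply, smul_eq_C_mul]

theorem pderiv_aeval_linear [Fintype σ] (M : Matrix σ σ R) (k : σ) (f : MvPolynomial σ R) :
    pderiv k (aeval (fun i => ∑ j, M i j • (X j : MvPolynomial σ R)) f) =
      aeval (fun i => ∑ j, M i j • (X j : MvPolynomial σ R)) (∑ i, M i k • pderiv i f) := by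
  rw [pderiv_aeval, map_sum]
  refine Finset.sum_congr rfl fun i _ => ?_
  rw [pderiv_sum_smul_X, map_smul, smul_eq_C_mul, mul_comm]

end MvPolynomial

theorem cone_apex_coordinate_change_general (n : ℕ)
    (f : MvPolynomial (Fin (n + 1)) ℂ)
    (p : Fin (n + 1) → ℂ)
    (hcone : ∑ i : Fin (n + 1), p i • pderiv i f = 0)
    (M : Matrix (Fin (n + 1)) (Fin (n + 1)) ℂ)
    (hMp : ∀ i, M i 0 = p i) :
    pderiv 0 (aeval (fun i : Fin (n + 1) =>
      ∑ j : Fin (n + 1), M i j • (X j : MvPolynomial (Fin (n + 1)) ℂ)) f) = 0 := by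
  rw [pderiv_aeval_linear]
  simp only [hMp, hcone, map_zero]

/-- If the partial derivatives of a homogeneous polynomial `f` satisfy
`∑ i, p i • ∂f/∂x_i = 0` identically, with `p 0 ≠ 0`, then after an invertible linear
change of coordinates `M` (given by a matrix whose `0`-th column is `p`, i.e. sending
the first basis vector `(1,0,…,0)` to `p`), the polynomial `f` in the new coordinates
does not depend on the first variable: `∂(f ∘ M)/∂x_0 = 0`. -/
theorem cone_apex_coordinate_change (n d : ℕ)
    (f : MvPolynomial (Fin (n + 1)) ℂ) (hf : f.IsHomogeneous d)
    (p : Fin (n + 1) → ℂ) (hp0 : p 0 ≠ 0)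
    (hcone : ∑ i : Fin (n + 1), p i • pderiv i f = 0)
    (M : Matrix (Fin (n + 1)) (Fin (n + 1)) ℂ) (hM : IsUnit M.det)
    (hMp : ∀ i, M i 0 = p i) :
    pderiv 0 (aeval (fun i : Fin (n + 1) =>
      ∑ j : Fin (n + 1), M i j • (X j : MvPolynomial (Fin (n + 1)) ℂ)) f) = 0 :=
  cone_apex_coordinate_change_general n f p hcone M hMp
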